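/- Under hypothesis (H), the Green function is uniformly bounded: there exists a constant C < ∞, depending only on ε and η, such that G(x,y) ≤ C for all x, y ∈ S. -/

import Mathlib

open scoped Classical

noncomputable section

/-- The `n`-step transition probabilities of the nearest-neighbour walk with
one-step transition probabilities `p`. -/
def pn {S : Type*} (p : S → S → ℝ) : ℕ → S → S → ℝ
  | 0, x, y => if x = y then 1 else 0
  | n + 1, x, y => ∑' z, p x z * pn p n z y

/-- The Green function `G(x,y) = ∑_n p_n(x,y)`. -/
def green {S : Type*} (p : S → S → ℝ) (x y : S) : ℝ := ∑' n, pn p n x y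

/-!
Let `a := max (1/2 - η) 0 < 1/2` bound the edge probabilities and fix `y`. In a tree at most
one neighbour of `x` is closer to `y`, so with `θ = 1 / (2 (1 - a))` the function
`f = θ ^ dist(·, y)` satisfies `P f ≤ L f` for `L = 2a(1 - a) + 1/2 < 1`. Iterating,
`pₙ(x, y) ≤ Lⁿ f(x) ≤ Lⁿ`, and summing the geometric series gives `G(x, y) ≤ 2 / (1 - 2a)²`.
-/

open Finset

namespace SimpleGraph

variable {V : Type*} {G : SimpleGraph V}

lemma IsAcyclic.eq_of_adj_of_dist_add_one_eq (hG : G.IsAcyclic) {x y z₁ z₂ : V}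
    (h₁ : G.Adj x z₁) (h₂ : G.Adj x z₂) (hd₁ : G.dist z₁ y + 1 = G.dist x y)
    (hd₂ : G.dist z₂ y + 1 = G.dist x y) : z₁ = z₂ := by
  have hxy : G.Reachable x y := Reachable.of_dist_ne_zero (by omega)
  obtain ⟨P₁, -, hP₁⟩ := (h₁.symm.reachable.trans hxy).exists_path_of_dist
  obtain ⟨P₂, -, hP₂⟩ := (h₂.symm.reachable.trans hxy).exists_path_of_dist
  -- prepending the edge to a geodesic from `zᵢ` gives a geodesic, hence the path, from `x`
  have hQ₁ := (Walk.cons h₁ P₁).isPath_of_length_eq_dist (by simp [hP₁, hd₁])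
  have hQ₂ := (Walk.cons h₂ P₂).isPath_of_length_eq_dist (by simp [hP₂, hd₂])
  have hQ : Walk.cons h₁ P₁ = Walk.cons h₂ P₂ :=
    congrArg Subtype.val ((hG.subsingleton_path x y).elim ⟨_, hQ₁⟩ ⟨_, hQ₂⟩)
  simpa using congrArg Walk.snd hQ

end SimpleGraph

section RandomWalk

variable {S : Type*} {p : S → S → ℝ}

lemma pn_nonneg (hp : ∀ x y, 0 ≤ p x y) (n : ℕ) (x y : S) : 0 ≤ pn p n x y := by
  induction n generalizing x with
  | zero => unfold pn; split_ifs <;> norm_num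
  | succ n ih => exact tsum_nonneg fun z => mul_nonneg (hp x z) (ih z)

lemma green_le_of_pn_le_pow (hp : ∀ x y, 0 ≤ p x y) {L : ℝ} (hL0 : 0 ≤ L) (hL1 : L < 1)
    {x y : S} (h : ∀ n, pn p n x y ≤ L ^ n) : green p x y ≤ (1 - L)⁻¹ := by
  have hgeom := summable_geometric_of_lt_one hL0 hL1
  calc green p x y ≤ ∑' n, L ^ n :=
        (hgeom.of_nonneg_of_le (fun n => pn_nonneg hp n x y) h).tsum_le_tsum h hgeom
    _ = (1 - L)⁻¹ := tsum_geometric_of_lt_one hL0 hL1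

variable {G : SimpleGraph S} [∀ x, Fintype (G.neighborSet x)]

lemma pn_succ_eq_sum (hp_zero : ∀ x y, ¬ G.Adj x y → p x y = 0) (n : ℕ) (x y : S) :
    pn p (n + 1) x y = ∑ z ∈ G.neighborFinset x, p x z * pn p n z y :=
  tsum_eq_sum fun z hz => by
    rw [hp_zero x z (by simpa using hz), zero_mul]

lemma pn_le_pow_mul_of_sum_le (hp : ∀ x y, 0 ≤ p x y)
    (hp_zero : ∀ x y, ¬ G.Adj x y → p x y = 0) {f : S → ℝ} {L : ℝ} {y : S} (hL : 0 ≤ L)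
    (hf0 : ∀ x, 0 ≤ f x) (hfy : 1 ≤ f y)
    (hf : ∀ x, ∑ z ∈ G.neighborFinset x, p x z * f z ≤ L * f x) (n : ℕ) (x : S) :
    pn p n x y ≤ L ^ n * f x := by
  induction n generalizing x with
  | zero =>
    unfold pn
    split_ifs with hxy
    · simpa [hxy] using hfy
    · simpa using hf0 x
  | succ n ih =>
    calc pn p (n + 1) x y = ∑ z ∈ G.neighborFinset x, p x z * pn p n z y :=
          pn_succ_eq_sum hp_zero n x y
      _ ≤ ∑ z ∈ G.neighborFinset x, p x z * (L ^ n * f z) :=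
          sum_le_sum fun z _ => mul_le_mul_of_nonneg_left (ih z) (hp x z)
      _ = L ^ n * ∑ z ∈ G.neighborFinset x, p x z * f z := by
          rw [mul_sum]; exact sum_congr rfl fun z _ => by ring
      _ ≤ L ^ n * (L * f x) := mul_le_mul_of_nonneg_left (hf x) (pow_nonneg hL n)
      _ = L ^ (n + 1) * f x := by ring

/-- At most one neighbour of `x` is closer to `y`, and it is entered with probability at
most `a`. -/
lemma SimpleGraph.IsTree.sum_mul_pow_dist_le (hG : G.IsTree) {a θ L : ℝ} {x : S} (y : S)
    (hx_sum : ∑ z ∈ G.neighborFinset x, p x z ≤ 1) (hx_le : ∀ z, G.Adj x z → p x z ≤ a)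
    (hθ0 : 0 ≤ θ) (hθ1 : θ ≤ 1) (hθL : θ ≤ L) (haθL : a + (1 - a) * θ ^ 2 ≤ L * θ) :
    ∑ z ∈ G.neighborFinset x, p x z * θ ^ G.dist z y ≤ L * θ ^ G.dist x y := by
  have hdist : ∀ z, G.Adj x z → G.dist z y = G.dist x y + 1 ∨ G.dist z y + 1 = G.dist x y :=
    fun z hz => by
      have := hG.dist_eq_dist_add_one_of_adj y hz
      rw [G.dist_comm (u := y), G.dist_comm (u := y)] at this
      omega
  by_cases hcloser : ∃ z₀, G.Adj x z₀ ∧ G.dist z₀ y + 1 = G.dist x y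
  · obtain ⟨z₀, hz₀, hd₀⟩ := hcloser
    set k := G.dist z₀ y
    have hfar : ∀ z ∈ (G.neighborFinset x).erase z₀, G.dist z y = k + 2 := fun z hz => by
      obtain ⟨hne, hz⟩ := mem_erase.mp hz
      rw [mem_neighborFinset] at hz
      have := (hdist z hz).resolve_right fun h =>
        hne (hG.isAcyclic.eq_of_adj_of_dist_add_one_eq hz hz₀ h hd₀)
      omega
    have hz₀N : z₀ ∈ G.neighborFinset x := (mem_neighborFinset ..).mpr hz₀
    set R := ∑ z ∈ (G.neighborFinset x).erase z₀, p x z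
    have hR : R ≤ 1 - p x z₀ := by
      rw [← add_sum_erase _ _ hz₀N] at hx_sum; linarith
    have hpow : θ ^ 2 ≤ 1 := pow_le_one₀ hθ0 hθ1
    have ht : 0 ≤ θ ^ k := pow_nonneg hθ0 k
    calc ∑ z ∈ G.neighborFinset x, p x z * θ ^ G.dist z y
        = p x z₀ * θ ^ k + R * θ ^ 2 * θ ^ k := by
          rw [← add_sum_erase _ _ hz₀N, sum_mul, sum_mul]
          congr 1
          exact sum_congr rfl fun z hz => by rw [hfar z hz]; ring
      _ ≤ p x z₀ * θ ^ k + (1 - p x z₀) * θ ^ 2 * θ ^ k := by gcongr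
      _ = (θ ^ 2 + p x z₀ * (1 - θ ^ 2)) * θ ^ k := by ring
      _ ≤ (θ ^ 2 + a * (1 - θ ^ 2)) * θ ^ k := by gcongr; exact hx_le z₀ hz₀
      _ ≤ L * θ * θ ^ k := by gcongr; linarith
      _ = L * θ ^ G.dist x y := by rw [← hd₀]; ring
  · push Not at hcloser
    calc ∑ z ∈ G.neighborFinset x, p x z * θ ^ G.dist z y
        = (∑ z ∈ G.neighborFinset x, p x z) * θ * θ ^ G.dist x y := by
          rw [sum_mul, sum_mul]
          refine sum_congr rfl fun z hz => ?_
          rw [mem_neighborFinset] at hz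
          rw [(hdist z hz).resolve_right (hcloser z hz)]; ring
      _ ≤ 1 * L * θ ^ G.dist x y := by gcongr
      _ = L * θ ^ G.dist x y := by ring

theorem SimpleGraph.IsTree.green_le (hG : G.IsTree) (hp : ∀ x y, 0 ≤ p x y)
    (hp_zero : ∀ x y, ¬ G.Adj x y → p x y = 0)
    (hp_sum : ∀ x, ∑ z ∈ G.neighborFinset x, p x z ≤ 1) {a : ℝ} (ha0 : 0 ≤ a) (ha : a < 1 / 2)
    (hp_le : ∀ x z, G.Adj x z → p x z ≤ a) (x y : S) :
    green p x y ≤ 2 / (1 - 2 * a) ^ 2 := by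
  -- `θ` is the midpoint of the roots `a / (1 - a)` and `1` of `(1 - a) θ² - θ + a`,
  -- so that `L = a / θ + (1 - a) θ < 1`.
  set θ : ℝ := (2 * (1 - a))⁻¹ with hθ
  set L : ℝ := 2 * a * (1 - a) + 1 / 2 with hL
  have ha1 : 0 < 1 - a := by linarith
  have h2a : 0 < 2 * (1 - a) := by positivity
  have hθ0 : 0 ≤ θ := by positivity
  have hθ1 : θ ≤ 1 := inv_le_one_of_one_le₀ (by linarith)
  have hθL : θ ≤ L := by
    rw [hθ, hL, inv_le_iff_one_le_mul₀ h2a]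
    nlinarith [mul_nonneg ha0 (mul_nonneg ha0 (by linarith : (0 : ℝ) ≤ 1 - 2 * a))]
  have hLθ : a + (1 - a) * θ ^ 2 ≤ L * θ := le_of_eq (by rw [hθ, hL]; field_simp)
  have hL1 : L < 1 := by rw [hL]; nlinarith
  have hpn : ∀ n, pn p n x y ≤ L ^ n := fun n =>
    calc pn p n x y ≤ L ^ n * θ ^ G.dist x y :=
          pn_le_pow_mul_of_sum_le hp hp_zero (hθ0.trans hθL) (fun _ => pow_nonneg hθ0 _)
            (by simp) (fun x => hG.sum_mul_pow_dist_le y (hp_sum x) (hp_le x) hθ0 hθ1 hθL hLθ)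
            n x
      _ ≤ L ^ n := mul_le_of_le_one_right (pow_nonneg (hθ0.trans hθL) n) (pow_le_one₀ hθ0 hθ1)
  calc green p x y ≤ (1 - L)⁻¹ := green_le_of_pn_le_pow hp (hθ0.trans hθL) hL1 hpn
    _ = 2 / (1 - 2 * a) ^ 2 := by rw [show 1 - L = (1 - 2 * a) ^ 2 / 2 by ring, inv_div]

end RandomWalk

/-- Under hypothesis (H) the Green function is uniformly
bounded by a constant depending only on `ε` and `η`. -/
theorem green_uniformly_bounded
    {S : Type*} [Countable S] (G : SimpleGraph S)
    [∀ x : S, Fintype (G.neighborSet x)]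
    (hconn : G.Connected) (hacyc : G.IsAcyclic)
    (p : S → S → ℝ)
    (hp_pos : ∀ x y, 0 < p x y ↔ G.Adj x y)
    (hp_zero : ∀ x y, ¬ G.Adj x y → p x y = 0)
    (hp_sum : ∀ x, ∑ y ∈ G.neighborFinset x, p x y = 1)
    (ε η : ℝ) (hε : 0 < ε) (hη : 0 < η)
    (hH : ∀ x y, G.Adj x y → ε ≤ p x y ∧ p x y ≤ 1 / 2 - η) :
    ∃ C : ℝ, ∀ x y : S, green p x y ≤ C := by
  have hp : ∀ x y, 0 ≤ p x y := fun x y => by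
    by_cases h : G.Adj x y
    · exact ((hp_pos x y).mpr h).le
    · exact (hp_zero x y h).ge
  have hG : G.IsTree := ⟨hconn, hacyc⟩
  set a := max (1 / 2 - η) 0
  exact ⟨2 / (1 - 2 * a) ^ 2, hG.green_le hp hp_zero (fun x => (hp_sum x).le)
    (le_max_right _ _) (max_lt (by linarith) (by norm_num))
    (fun x z hxz => (hH x z hxz).2.trans (le_max_left _ _))⟩

end
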